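/- For every positive integer s, the first-order sentence KEIN_s is not expressible by any first-order sentence on rooted, locally finite trees whose alternating quantifier depth is at most s-1. -/

import Mathlib

/-! ## Rooted trees -/

/-- A rooted tree structure: a vertex type, a root, and a parent map
(`parent v = none` is intended to hold exactly when `v` is the root). -/
structure RTree where
  V : Type
  root : V
  parent : V → Option V

namespace RTree

/-- Iterate the parent map `n` times. -/
def parentIter (T : RTree) : ℕ → T.V → Option T.V
  | 0, v => some v
  | n + 1, v => (T.parent v).bind (T.parentIter n)

/-- `u` is a descendant of `v` (possibly `u = v`). -/
def IsDesc (T : RTree) (v u : T.V) : Prop :=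
  ∃ n, T.parentIter n u = some v

/-- The structure is a genuine rooted, locally finite tree:
exactly the root has no parent, every vertex reaches the root by iterating
the parent map (connectivity and acyclicity), and every vertex has finitely
many children (local finiteness). -/
def IsTree (T : RTree) : Prop :=
  (∀ v, T.parent v = none ↔ v = T.root) ∧
  (∀ v, ∃ n, T.parentIter n v = some T.root) ∧
  (∀ v, {u | T.parent u = some v}.Finite)

open Classical in
/-- The subtree `T(v)` consisting of `v` and all its descendants, rooted at `v`. -/
noncomputable def subtree (T : RTree) (v : T.V) : RTree where
  V := {u : T.V // T.IsDesc v u}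
  root := ⟨v, 0, rfl⟩
  parent u :=
    if u.1 = v then none
    else (T.parent u.1).bind fun w =>
      if h : T.IsDesc v w then some ⟨w, h⟩ else none

end RTree

/-- An isomorphism of rooted trees: a bijection of vertices mapping root to
root and commuting with the parent maps. -/
structure TreeIso (S T : RTree) where
  toEquiv : S.V ≃ T.V
  map_root : toEquiv S.root = T.root
  map_parent : ∀ v, (S.parent v).map toEquiv = T.parent (toEquiv v)

/-! ## First-order logic of rooted trees -/

/-- Terms: variables (de Bruijn indices) and the constant `R` for the root. -/
inductive FOTerm where
  | var : ℕ → FOTerm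
  | root : FOTerm
deriving DecidableEq

/-- First-order formulas in the language of rooted trees: equality `x = y`,
the parent relation `parentOf t t'` (meaning `π(t') = t`, i.e. `t` is the
parent of `t'`), Boolean connectives, and quantifiers (de Bruijn style). -/
inductive FOFormula where
  | eq : FOTerm → FOTerm → FOFormula
  | parentOf : FOTerm → FOTerm → FOFormula
  | not : FOFormula → FOFormula
  | and : FOFormula → FOFormula → FOFormula
  | or : FOFormula → FOFormula → FOFormula
  | imp : FOFormula → FOFormula → FOFormula
  | all : FOFormula → FOFormula
  | ex : FOFormula → FOFormula
deriving DecidableEq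

namespace FOTerm

def eval (T : RTree) (env : ℕ → T.V) : FOTerm → T.V
  | var n => env n
  | root => T.root

def freeBound : FOTerm → ℕ
  | var n => n + 1
  | root => 0

end FOTerm

/-- Kinds of quantifiers, used to count alternations. -/
inductive QKind where
  | ex | all
deriving DecidableEq

/-- The dual of a quantifier kind. -/
def QKind.dual : QKind → QKind
  | .ex => .all
  | .all => .ex

namespace FOFormula

/-- Satisfaction of a formula in a rooted tree under an environment. -/
def Sat (T : RTree) : FOFormula → (ℕ → T.V) → Prop
  | eq t₁ t₂, env => t₁.eval T env = t₂.eval T env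
  | parentOf t₁ t₂, env => T.parent (t₂.eval T env) = some (t₁.eval T env)
  | not φ, env => ¬ φ.Sat T env
  | and φ ψ, env => φ.Sat T env ∧ ψ.Sat T env
  | or φ ψ, env => φ.Sat T env ∨ ψ.Sat T env
  | imp φ ψ, env => φ.Sat T env → ψ.Sat T env
  | all φ, env => ∀ w : T.V, φ.Sat T (fun n => match n with | 0 => w | Nat.succ k => env k)
  | ex φ, env => ∃ w : T.V, φ.Sat T (fun n => match n with | 0 => w | Nat.succ k => env k)

/-- Quantifier depth: the maximum number of nested quantifiers. -/
def qd : FOFormula → ℕ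
  | eq _ _ => 0
  | parentOf _ _ => 0
  | not φ => φ.qd
  | and φ ψ => max φ.qd ψ.qd
  | or φ ψ => max φ.qd ψ.qd
  | imp φ ψ => max φ.qd ψ.qd
  | all φ => φ.qd + 1
  | ex φ => φ.qd + 1

/-- Auxiliary alternation count: `aqdAux φ pol q` is the maximum number of
alternations between (effectively) existential and universal quantifiers along
a nested quantifier sequence of `φ`, given the current polarity `pol`
(`true` = positive; negations and antecedents of implications flip it, so that
e.g. a `∀` under a negation counts as an `∃`) and the effective kind `q` of
the innermost enclosing quantifier (if any). -/
def aqdAux : FOFormula → Bool → Option QKind → ℕ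
  | eq _ _, _, _ => 0
  | parentOf _ _, _, _ => 0
  | not φ, pol, q => φ.aqdAux (!pol) q
  | and φ ψ, pol, q => max (φ.aqdAux pol q) (ψ.aqdAux pol q)
  | or φ ψ, pol, q => max (φ.aqdAux pol q) (ψ.aqdAux pol q)
  | imp φ ψ, pol, q => max (φ.aqdAux (!pol) q) (ψ.aqdAux pol q)
  | all φ, pol, q =>
      (if q = some (if pol then QKind.ex else QKind.all) then 1 else 0) +
        φ.aqdAux pol (some (if pol then QKind.all else QKind.ex))
  | ex φ, pol, q =>
      (if q = some (if pol then QKind.all else QKind.ex) then 1 else 0) +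
        φ.aqdAux pol (some (if pol then QKind.ex else QKind.all))

/-- The number of alternations of quantifiers of a formula: the maximum number
of switches between (effectively) existential and universal quantifiers in a
nested quantifier sequence.  Purely existential or purely universal formulas
have `aqd = 0`. -/
def aqd (φ : FOFormula) : ℕ := φ.aqdAux true none

/-- A bound on the free variables of a formula: all free de Bruijn indices
are `< freeBound`. -/
def freeBound : FOFormula → ℕ
  | eq t₁ t₂ => max t₁.freeBound t₂.freeBound
  | parentOf t₁ t₂ => max t₁.freeBound t₂.freeBound
  | not φ => φ.freeBound
  | and φ ψ => max φ.freeBound ψ.freeBound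
  | or φ ψ => max φ.freeBound ψ.freeBound
  | imp φ ψ => max φ.freeBound ψ.freeBound
  | all φ => φ.freeBound - 1
  | ex φ => φ.freeBound - 1

/-- A sentence is a formula with no free variables. -/
def IsSentence (φ : FOFormula) : Prop := φ.freeBound = 0

end FOFormula

/-- A (closed) formula holds in a rooted tree. -/
def Models (T : RTree) (φ : FOFormula) : Prop :=
  φ.Sat T (fun _ => T.root)

/-- The formula `P_i(x)`, with free variable `x` being de Bruijn index `0`:
`P_0(x) = ∀ y ¬(π(y) = x)` and `P_{i+1}(x) = ∀ y (π(y) = x → ¬ P_i(y))`. -/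
def Pform : ℕ → FOFormula
  | 0 => .all (.not (.parentOf (.var 1) (.var 0)))
  | i + 1 => .all (.imp (.parentOf (.var 1) (.var 0)) (.not (Pform i)))

/-- The sentence `KEIN_i = P_i(R)`. -/
def KEIN : ℕ → FOFormula
  | 0 => .all (.not (.parentOf .root (.var 0)))
  | i + 1 => .all (.imp (.parentOf .root (.var 0)) (.not (Pform i)))

/-! ## Ehrenfeucht games -/

/-- The winning condition for Duplicator: for all pairs `(x_i, y_i)`, `(x_j, y_j)`
in the list of selected/designated pairs, (Main 1) `π(x_j) = x_i ↔ π(y_j) = y_i`,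
and (Main 2) `x_i = x_j ↔ y_i = y_j`. -/
def GoodPairs (T₁ T₂ : RTree) (ps : List (T₁.V × T₂.V)) : Prop :=
  ∀ p ∈ ps, ∀ q ∈ ps,
    (T₁.parent p.1 = some q.1 ↔ T₂.parent p.2 = some q.2) ∧
    (p.1 = q.1 ↔ p.2 = q.2)

/-- Duplicator wins the scheduled Ehrenfeucht game on `T₁, T₂` in which Spoiler
must play his moves in consecutive batches, the batch sizes given by the list
`sched`, switching trees after each batch; `side = true` means Spoiler currently
plays on `T₁` (Duplicator answering on `T₂`), `side = false` means Spoiler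
currently plays on `T₂`.  The list `ps` records the pairs selected so far
(including designated pairs and the pair of roots); Duplicator wins when the
final configuration satisfies `GoodPairs`. -/
def DupWinsSched (T₁ T₂ : RTree) : List ℕ → Bool → List (T₁.V × T₂.V) → Prop
  | [], _, ps => GoodPairs T₁ T₂ ps
  | 0 :: rest, side, ps => DupWinsSched T₁ T₂ rest (!side) ps
  | (n + 1) :: rest, side, ps =>
      if side then
        ∀ x : T₁.V, ∃ y : T₂.V, DupWinsSched T₁ T₂ (n :: rest) side ((x, y) :: ps)
      else
        ∀ y : T₂.V, ∃ x : T₁.V, DupWinsSched T₁ T₂ (n :: rest) side ((x, y) :: ps)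
termination_by sched _ _ => (sched.length, sched.sum)
decreasing_by
  all_goals
    first
      | exact Prod.Lex.left _ _ (Nat.lt_succ_self _)
      | exact Prod.Lex.right _ (by simp [List.sum_cons])

/-- The cost (in switches) for Spoiler of playing on side `side` when his
previous move (if any) was on side `last`. -/
def switchCost (last : Option Bool) (side : Bool) : ℕ :=
  match last with
  | none => 0
  | some b => if b = side then 0 else 1

/-- Duplicator wins the Ehrenfeucht game `EHR` with `rounds` remaining rounds,
`sw` remaining switches allowed to Spoiler, `last` the side on which Spoiler
made his previous move (if any), and `ps` the pairs selected so far.  In each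
round Spoiler picks a side (paying a switch if he changes trees, which he may
do only if he has switches left) and a vertex in that tree, and Duplicator
answers in the other tree. -/
def DupWinsEHRAux (T₁ T₂ : RTree) :
    ℕ → ℕ → Option Bool → List (T₁.V × T₂.V) → Prop
  | 0, _, _, ps => GoodPairs T₁ T₂ ps
  | r + 1, sw, last, ps =>
      ∀ side : Bool, switchCost last side ≤ sw →
        if side then
          ∀ x : T₁.V, ∃ y : T₂.V,
            DupWinsEHRAux T₁ T₂ r (sw - switchCost last side) (some side) ((x, y) :: ps)
        else
          ∀ y : T₂.V, ∃ x : T₁.V,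
            DupWinsEHRAux T₁ T₂ r (sw - switchCost last side) (some side) ((x, y) :: ps)

/-- Duplicator wins the game `EHR[T₁, T₂, s, r]`: `r` rounds, Spoiler may start
on either tree and make at most `s` switches. -/
def DupWinsEHR (T₁ T₂ : RTree) (s r : ℕ) : Prop :=
  DupWinsEHRAux T₁ T₂ r s none [(T₁.root, T₂.root)]

/-! ## The trees `T₁^{(s,k,m)}` and `T₂^{(s,k,m)}` -/

/-- The one-vertex rooted tree. -/
def single : RTree where
  V := PUnit
  root := PUnit.unit
  parent := fun _ => none

/-- Hang the trees `f 0, …, f (n-1)` from a new root: the root of each `f i`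
becomes a child of the new root. -/
def hang (n : ℕ) (f : Fin n → RTree) : RTree where
  V := Unit ⊕ (Σ i : Fin n, (f i).V)
  root := Sum.inl ()
  parent := fun x =>
    match x with
    | Sum.inl _ => none
    | Sum.inr ⟨i, w⟩ =>
      match (f i).parent w with
      | none => some (Sum.inl ())
      | some w' => some (Sum.inr ⟨i, w'⟩)

/-- The pair of trees `(T₁^{(s,k,m)}, T₂^{(s,k,m)})`, indexed by `s` (the
parameter `k` plays no role in the construction).  Conventions for `s = 0`:
`T₁^{(0)}` is a single vertex and `T₂^{(0)}` is a star of `m` childless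
children.  For `s ≥ 1`: in `T₁^{(s+1)}` the root has `m+1` children, from each
of which hangs a copy of `T₂^{(s)}`; in `T₂^{(s+1)}` the root has `m+1`
children, from `m` of which hangs a copy of `T₂^{(s)}` and from the remaining
one hangs a copy of `T₁^{(s)}`. -/
def TreePair (m : ℕ) : ℕ → RTree × RTree
  | 0 => (single, hang m fun _ => single)
  | s + 1 =>
      (hang (m + 1) fun _ => (TreePair m s).2,
       hang (m + 1) fun i => if i.1 = m then (TreePair m s).1 else (TreePair m s).2)

/-- The tree `T₁^{(s,k,m)}`. -/
def Tree1 (s k m : ℕ) : RTree := (TreePair m s).1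

/-- The tree `T₂^{(s,k,m)}`. -/
def Tree2 (s k m : ℕ) : RTree := (TreePair m s).2

/-!
Ehrenfeucht games in which Spoiler plays in a bounded number of blocks of consecutive moves in
one tree detect alternation depth: if Duplicator survives `r` rounds against at most `s` blocks,
every sentence of quantifier depth at most `r` and alternation depth below `s` that holds in `T₁`
holds in `T₂`; negations are absorbed by exchanging the two trees.

Below the roots of `T₁^{(s+1)}` and `T₂^{(s+1)}` hang `m + 1` copies of `T₂^{(s)}`, except for a
single copy of `T₁^{(s)}` in `T₂^{(s+1)}`, so `KEIN_s` separates `T₁^{(s)}` from `T₂^{(s)}`.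
Duplicator matches components as Spoiler enters them and mirrors moves in equal components; as
`m` bounds the number of rounds, a fresh component is always available. By induction on `s`,
Duplicator survives `s` blocks starting in `T₂^{(s)}` and `s + 1` starting in `T₁^{(s)}`: the odd
component is matched only when Spoiler enters it from `T₂^{(s+1)}` with at most `s + 1` blocks,
and it then hosts the level-`s` game with the trees exchanged, which Spoiler starts in `T₁^{(s)}`.
-/

namespace RTree

def P (T : RTree) : ℕ → T.V → Prop
  | 0, v => ∀ u, T.parent u ≠ some v
  | i + 1, v => ∀ u, T.parent u = some v → ¬ T.P i u

end RTree

theorem sat_Pform (T : RTree) (i : ℕ) (env : ℕ → T.V) :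
    (Pform i).Sat T env ↔ T.P i (env 0) := by
  induction i generalizing env with
  | zero => rfl
  | succ i ih => exact forall_congr' fun u => imp_congr_right fun _ => not_congr (ih _)

theorem models_KEIN (T : RTree) (i : ℕ) : Models T (KEIN i) ↔ T.P i T.root := by
  cases i with
  | zero => rfl
  | succ i => exact forall_congr' fun u => imp_congr_right fun _ => not_congr (sat_Pform T i _)

/-- Duplicator survives `r` more rounds from position `ps` when Spoiler, playing in blocks of
consecutive moves in one tree, has `a` blocks left if his next move is in `T₁` and `b` blocks
left if it is in `T₂`. -/
def DupWinsBlocks (T₁ T₂ : RTree) : ℕ → ℕ → ℕ → List (T₁.V × T₂.V) → Prop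
  | 0, _, _, ps => GoodPairs T₁ T₂ ps
  | r + 1, a, b, ps =>
      GoodPairs T₁ T₂ ps ∧
      (1 ≤ a → ∀ x : T₁.V, ∃ y : T₂.V, DupWinsBlocks T₁ T₂ r a (a - 1) ((x, y) :: ps)) ∧
      (1 ≤ b → ∀ y : T₂.V, ∃ x : T₁.V, DupWinsBlocks T₁ T₂ r (b - 1) b ((x, y) :: ps))

namespace DupWinsBlocks

variable {T₁ T₂ : RTree}

theorem goodPairs {r a b : ℕ} {ps : List (T₁.V × T₂.V)} (h : DupWinsBlocks T₁ T₂ r a b ps) :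
    GoodPairs T₁ T₂ ps := by
  cases r with
  | zero => exact h
  | succ r => exact h.1

theorem mono {r a b r' a' b' : ℕ} {ps : List (T₁.V × T₂.V)} (h : DupWinsBlocks T₁ T₂ r a b ps)
    (hr : r' ≤ r) (ha : a' ≤ a) (hb : b' ≤ b) : DupWinsBlocks T₁ T₂ r' a' b' ps := by
  induction r' generalizing r a b a' b' ps with
  | zero => exact h.goodPairs
  | succ r' ih =>
    obtain ⟨r, rfl⟩ : ∃ r₀, r = r₀ + 1 := ⟨r - 1, by omega⟩
    refine ⟨h.1, fun ha' x => ?_, fun hb' y => ?_⟩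
    · obtain ⟨y, hy⟩ := h.2.1 (ha'.trans ha) x
      exact ⟨y, ih hy (by omega) ha (by omega)⟩
    · obtain ⟨x, hx⟩ := h.2.2 (hb'.trans hb) y
      exact ⟨x, ih hx (by omega) (by omega) hb⟩

end DupWinsBlocks

theorem GoodPairs.swap {T₁ T₂ : RTree} {ps : List (T₁.V × T₂.V)} (h : GoodPairs T₁ T₂ ps) :
    GoodPairs T₂ T₁ (ps.map Prod.swap) := by
  simp only [GoodPairs, List.mem_map] at h ⊢
  rintro _ ⟨p, hp, rfl⟩ _ ⟨q, hq, rfl⟩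
  exact ⟨(h p hp q hq).1.symm, (h p hp q hq).2.symm⟩

theorem DupWinsBlocks.swap {T₁ T₂ : RTree} {r a b : ℕ} {ps : List (T₁.V × T₂.V)}
    (h : DupWinsBlocks T₁ T₂ r a b ps) : DupWinsBlocks T₂ T₁ r b a (ps.map Prod.swap) := by
  induction r generalizing a b ps with
  | zero => exact GoodPairs.swap h
  | succ r ih =>
    refine ⟨h.1.swap, fun hb y => ?_, fun ha x => ?_⟩
    · obtain ⟨x, hx⟩ := h.2.2 hb y
      exact ⟨x, ih hx⟩
    · obtain ⟨y, hy⟩ := h.2.1 ha x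
      exact ⟨y, ih hy⟩

/-- The number of blocks Spoiler has left when the innermost enclosing quantifier, read in
positive polarity, has kind `q`: an `∃` was played in `T₁`, a `∀` in `T₂`. -/
def blocksAfter : Option QKind → ℕ → ℕ → ℕ
  | some .ex, a, _ => a
  | some .all, _, b => b
  | none, a, b => min a b

theorem blocksAfter_map_dual (q : Option QKind) (a b : ℕ) :
    blocksAfter (q.map QKind.dual) b a = blocksAfter q a b := by
  rcases q with _ | _ | _ <;> simp [blocksAfter, QKind.dual, min_comm]

theorem lt_of_add_lt_blocksAfter_all {q : Option QKind} {a b c : ℕ} (hab : a ≤ b + 1)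
    (h : (if q = some .ex then 1 else 0) + c < blocksAfter q a b) : c < b := by
  rcases q with _ | _ | _ <;> simp [blocksAfter] at h <;> omega

theorem lt_of_add_lt_blocksAfter_ex {q : Option QKind} {a b c : ℕ} (hba : b ≤ a + 1)
    (h : (if q = some .all then 1 else 0) + c < blocksAfter q a b) : c < a := by
  rcases q with _ | _ | _ <;> simp [blocksAfter] at h <;> omega

theorem FOFormula.aqdAux_not (φ : FOFormula) (pol : Bool) (q : Option QKind) :
    φ.aqdAux (!pol) q = φ.aqdAux pol (q.map QKind.dual) := by
  induction φ generalizing pol q with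
  | eq | parentOf => rfl
  | not φ ih => exact ih _ _
  | and φ ψ ihφ ihψ | or φ ψ ihφ ihψ | imp φ ψ ihφ ihψ =>
    simp only [FOFormula.aqdAux, ihφ, ihψ]
  | all φ ih | ex φ ih =>
    cases pol <;> rcases q with _ | _ | _ <;> simp only [FOFormula.aqdAux] <;>
      first | exact congrArg _ (ih false _) | exact congrArg _ (ih true _)

theorem FOTerm.eval_mem_cons {T₁ T₂ : RTree} {ps : List (T₁.V × T₂.V)} {env₁ : ℕ → T₁.V}
    {env₂ : ℕ → T₂.V} (h : ∀ t : FOTerm, (t.eval T₁ env₁, t.eval T₂ env₂) ∈ ps)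
    (x : T₁.V) (y : T₂.V) (t : FOTerm) :
    (t.eval T₁ (fun n => match n with | 0 => x | k + 1 => env₁ k),
      t.eval T₂ (fun n => match n with | 0 => y | k + 1 => env₂ k)) ∈ (x, y) :: ps := by
  rcases t with (_ | k) | _
  · exact List.mem_cons_self
  · exact List.mem_cons_of_mem _ (h (.var k))
  · exact List.mem_cons_of_mem _ (h .root)

theorem FOFormula.sat_of_dupWinsBlocks (φ : FOFormula) {T₁ T₂ : RTree} {r a b : ℕ}
    {q : Option QKind} {ps : List (T₁.V × T₂.V)} {env₁ : ℕ → T₁.V} {env₂ : ℕ → T₂.V}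
    (hterms : ∀ t : FOTerm, (t.eval T₁ env₁, t.eval T₂ env₂) ∈ ps) (hqd : φ.qd ≤ r)
    (hab : a ≤ b + 1) (hba : b ≤ a + 1) (hD : DupWinsBlocks T₁ T₂ r a b ps)
    (hφ : φ.aqdAux true q < blocksAfter q a b) : φ.Sat T₁ env₁ → φ.Sat T₂ env₂ := by
  induction φ generalizing T₁ T₂ r a b q ps env₁ env₂ with
  | eq t₁ t₂ => exact ((hD.goodPairs _ (hterms t₁) _ (hterms t₂)).2).1
  | parentOf t₁ t₂ => exact ((hD.goodPairs _ (hterms t₂) _ (hterms t₁)).1).1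
  | not φ ih =>
    rw [FOFormula.aqdAux, FOFormula.aqdAux_not, ← blocksAfter_map_dual] at hφ
    exact mt (ih (fun t => List.mem_map_of_mem (hterms t)) hqd hba hab hD.swap hφ)
  | and φ ψ ihφ ihψ =>
    simp only [FOFormula.qd, FOFormula.aqdAux, max_le_iff, max_lt_iff] at hqd hφ
    exact And.imp (ihφ hterms hqd.1 hab hba hD hφ.1) (ihψ hterms hqd.2 hab hba hD hφ.2)
  | or φ ψ ihφ ihψ =>
    simp only [FOFormula.qd, FOFormula.aqdAux, max_le_iff, max_lt_iff] at hqd hφ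
    exact Or.imp (ihφ hterms hqd.1 hab hba hD hφ.1) (ihψ hterms hqd.2 hab hba hD hφ.2)
  | imp φ ψ ihφ ihψ =>
    simp only [FOFormula.qd, FOFormula.aqdAux, max_le_iff, max_lt_iff] at hqd hφ
    obtain ⟨hφ₁, hφ₂⟩ := hφ
    rw [FOFormula.aqdAux_not, ← blocksAfter_map_dual] at hφ₁
    exact fun h h₂ => ihψ hterms hqd.2 hab hba hD hφ₂
      (h (ihφ (fun t => List.mem_map_of_mem (hterms t)) hqd.1 hba hab hD.swap hφ₁ h₂))
  | all φ ih =>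
    intro h y
    obtain ⟨r, rfl⟩ : ∃ r₀, r = r₀ + 1 := ⟨r - 1, by simp only [FOFormula.qd] at hqd; omega⟩
    have hb : φ.aqdAux true (some .all) < b := lt_of_add_lt_blocksAfter_all hab hφ
    obtain ⟨x, hx⟩ := hD.2.2 (by omega) y
    exact ih (FOTerm.eval_mem_cons hterms x y) (by simpa [FOFormula.qd] using hqd)
      (by omega) (by omega) hx hb (h x)
  | ex φ ih =>
    rintro ⟨x, h⟩
    obtain ⟨r, rfl⟩ : ∃ r₀, r = r₀ + 1 := ⟨r - 1, by simp only [FOFormula.qd] at hqd; omega⟩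
    have ha : φ.aqdAux true (some .ex) < a := lt_of_add_lt_blocksAfter_ex hba hφ
    obtain ⟨y, hy⟩ := hD.2.1 (by omega) x
    exact ⟨y, ih (FOTerm.eval_mem_cons hterms x y) (by simpa [FOFormula.qd] using hqd)
      (by omega) (by omega) hy ha h⟩

theorem models_of_dupWinsBlocks {T₁ T₂ : RTree} {φ : FOFormula} {r a : ℕ} (hr : φ.qd ≤ r)
    (ha : φ.aqd < a) (h : DupWinsBlocks T₁ T₂ r a a [(T₁.root, T₂.root)]) :
    Models T₁ φ → Models T₂ φ :=
  φ.sat_of_dupWinsBlocks (q := none) (fun t => by cases t <;> exact List.mem_singleton_self _)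
    hr (by omega) (by omega) h (by simp only [blocksAfter, min_self]; exact ha)

section Hang

variable {n : ℕ} {f : Fin n → RTree}

theorem hang_parent_inr_of_eq_none {i : Fin n} {w : (f i).V} (h : (f i).parent w = none) :
    (hang n f).parent (Sum.inr ⟨i, w⟩) = some (Sum.inl ()) := by
  simp only [hang, h]

theorem hang_parent_inr_of_eq_some {i : Fin n} {w w' : (f i).V} (h : (f i).parent w = some w') :
    (hang n f).parent (Sum.inr ⟨i, w⟩) = some (Sum.inr ⟨i, w'⟩) := by
  simp only [hang, h]

theorem hang_parent_eq_inl_iff {u : (hang n f).V} {v : Unit} :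
    (hang n f).parent u = some (Sum.inl v) ↔
      ∃ i w, (f i).parent w = none ∧ u = Sum.inr ⟨i, w⟩ := by
  constructor
  · intro hu
    rcases u with _ | ⟨i, w⟩
    · exact nomatch hu
    cases h : (f i).parent w with
    | none => exact ⟨i, w, h, rfl⟩
    | some w' => rw [hang_parent_inr_of_eq_some h] at hu; cases hu
  · rintro ⟨i, w, h, rfl⟩
    exact hang_parent_inr_of_eq_none h

theorem hang_parent_eq_inr_iff {u : (hang n f).V} {j : Fin n} {w : (f j).V} :
    (hang n f).parent u = some (Sum.inr ⟨j, w⟩) ↔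
      ∃ w', (f j).parent w' = some w ∧ u = Sum.inr ⟨j, w'⟩ := by
  constructor
  · intro hu
    rcases u with _ | ⟨i, w'⟩
    · exact nomatch hu
    cases h : (f i).parent w' with
    | none => rw [hang_parent_inr_of_eq_none h] at hu; cases hu
    | some w'' =>
      rw [hang_parent_inr_of_eq_some h] at hu
      cases hu
      exact ⟨w', h, rfl⟩
  · rintro ⟨w', h, rfl⟩
    exact hang_parent_inr_of_eq_some h

theorem hang_parentIter_inr {i : Fin n} (hroot : (f i).parent (f i).root = none) :
    ∀ (k : ℕ) (w : (f i).V), (f i).parentIter k w = some (f i).root →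
      (hang n f).parentIter (k + 1) (Sum.inr ⟨i, w⟩) = some (hang n f).root
  | 0, w, h => by
    obtain rfl := Option.some.inj h
    exact congrArg (Option.bind · _) (hang_parent_inr_of_eq_none hroot)
  | k + 1, w, h => by
    obtain ⟨w', hw', hk⟩ := Option.bind_eq_some_iff.mp h
    exact (congrArg (Option.bind · _) (hang_parent_inr_of_eq_some hw')).trans
      (hang_parentIter_inr hroot k w' hk)

theorem hang_isTree (hf : ∀ i, (f i).IsTree) : (hang n f).IsTree := by
  refine ⟨fun v => ?_, fun v => ?_, fun v => ?_⟩
  · rcases v with _ | ⟨i, w⟩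
    · exact iff_of_true rfl rfl
    · refine iff_of_false (fun h => ?_) (fun h => by cases h)
      cases hw : (f i).parent w with
      | none => rw [hang_parent_inr_of_eq_none hw] at h; cases h
      | some w' => rw [hang_parent_inr_of_eq_some hw] at h; cases h
  · rcases v with _ | ⟨i, w⟩
    · exact ⟨0, rfl⟩
    · obtain ⟨k, hk⟩ := (hf i).2.1 w
      exact ⟨k + 1, hang_parentIter_inr (((hf i).1 _).mpr rfl) k w hk⟩
  · rcases v with u | ⟨j, w⟩
    · refine (Set.finite_range fun i => (Sum.inr ⟨i, (f i).root⟩ : (hang n f).V)).subset ?_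
      intro x hx
      obtain ⟨i, w, hw, rfl⟩ := hang_parent_eq_inl_iff.mp hx
      exact ⟨i, by rw [((hf i).1 w).mp hw]⟩
    · refine ((hf j).2.2 w).image (fun w' => (Sum.inr ⟨j, w'⟩ : (hang n f).V)) |>.subset ?_
      intro x hx
      obtain ⟨w', hw', rfl⟩ := hang_parent_eq_inr_iff.mp hx
      exact ⟨w', hw', rfl⟩

theorem hang_P_inr (i : ℕ) (j : Fin n) (w : (f j).V) :
    (hang n f).P i (Sum.inr ⟨j, w⟩) ↔ (f j).P i w := by
  induction i generalizing j w with
  | zero =>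
    simp only [RTree.P, ne_eq]
    refine ⟨fun h w' hw' => h _ (hang_parent_inr_of_eq_some hw'), fun h u hu => ?_⟩
    obtain ⟨w', hw', rfl⟩ := hang_parent_eq_inr_iff.mp hu
    exact h w' hw'
  | succ i ih =>
    simp only [RTree.P]
    refine ⟨fun h w' hw' => (ih j w').not.mp (h _ (hang_parent_inr_of_eq_some hw')),
      fun h u hu => ?_⟩
    obtain ⟨w', hw', rfl⟩ := hang_parent_eq_inr_iff.mp hu
    exact (ih j w').not.mpr (h w' hw')

theorem hang_P_succ_root (hf : ∀ j, (f j).IsTree) (i : ℕ) :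
    (hang n f).P (i + 1) (hang n f).root ↔ ∀ j, ¬ (f j).P i (f j).root := by
  refine ⟨fun h j => ?_, fun h u hu => ?_⟩
  · rw [← hang_P_inr]
    exact h _ (hang_parent_inr_of_eq_none (((hf j).1 _).mpr rfl))
  · obtain ⟨j, w, hw, rfl⟩ := hang_parent_eq_inl_iff.mp hu
    rw [hang_P_inr, ((hf j).1 w).mp hw]
    exact h j

end Hang

theorem single_isTree : single.IsTree :=
  ⟨fun _ => iff_of_true rfl rfl, fun _ => ⟨0, rfl⟩,
    fun _ => (Set.subsingleton_of_forall_eq PUnit.unit fun _ _ => rfl).finite⟩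

theorem isTree_treePair (m s : ℕ) : (TreePair m s).1.IsTree ∧ (TreePair m s).2.IsTree := by
  induction s with
  | zero => exact ⟨single_isTree, hang_isTree fun _ => single_isTree⟩
  | succ s ih =>
    refine ⟨hang_isTree fun _ => ih.2, hang_isTree fun i => ?_⟩
    split_ifs
    exacts [ih.1, ih.2]

theorem P_treePair {m : ℕ} (hm : 1 ≤ m) (s : ℕ) :
    (TreePair m s).1.P s (TreePair m s).1.root ∧ ¬ (TreePair m s).2.P s (TreePair m s).2.root := by
  induction s with
  | zero => exact ⟨fun _ h => (nomatch h), fun h => h (Sum.inr ⟨⟨0, hm⟩, PUnit.unit⟩) rfl⟩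
  | succ s ih =>
    obtain ⟨hT₁, hT₂⟩ := isTree_treePair m s
    refine ⟨(hang_P_succ_root (fun _ => hT₂) s).mpr fun _ => ih.2, fun h => ?_⟩
    refine (hang_P_succ_root (fun i => ?_) s).mp h ⟨m, m.lt_succ_self⟩ ?_
    · split_ifs
      exacts [hT₁, hT₂]
    · rw [if_pos rfl]
      exact ih.1

def GoodPair (T₁ T₂ : RTree) (p q : T₁.V × T₂.V) : Prop :=
  (T₁.parent p.1 = some q.1 ↔ T₂.parent p.2 = some q.2) ∧ (p.1 = q.1 ↔ p.2 = q.2)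

section HangGame

variable {n n' : ℕ} {f : Fin n → RTree} {g : Fin n' → RTree}

theorem hang_inr_inj {i j : Fin n} {x : (f i).V} {y : (f j).V}
    (h : (Sum.inr ⟨i, x⟩ : (hang n f).V) = Sum.inr ⟨j, y⟩) : i = j ∧ HEq x y :=
  Sigma.mk.inj_iff.mp (Sum.inr.inj h)

theorem hang_parent_inr_eq_inl_iff {i : Fin n} {w : (f i).V} {v : Unit} :
    (hang n f).parent (Sum.inr ⟨i, w⟩) = some (Sum.inl v) ↔ (f i).parent w = none := by
  refine hang_parent_eq_inl_iff.trans ⟨?_, fun h => ⟨i, w, h, rfl⟩⟩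
  rintro ⟨i', w', h, he⟩
  obtain ⟨rfl, hw⟩ := hang_inr_inj he
  rwa [eq_of_heq hw]

theorem hang_parent_inr_eq_inr_iff {i : Fin n} {w w' : (f i).V} :
    (hang n f).parent (Sum.inr ⟨i, w⟩) = some (Sum.inr ⟨i, w'⟩) ↔ (f i).parent w = some w' := by
  refine hang_parent_eq_inr_iff.trans ⟨?_, fun h => ⟨w, h, rfl⟩⟩
  rintro ⟨w'', h, he⟩
  rwa [eq_of_heq (hang_inr_inj he).2]

theorem hang_parent_inr_ne_inr {i j : Fin n} (hij : i ≠ j) (w : (f i).V) (w' : (f j).V) :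
    (hang n f).parent (Sum.inr ⟨i, w⟩) ≠ some (Sum.inr ⟨j, w'⟩) := fun h => by
  obtain ⟨_, _, he⟩ := hang_parent_eq_inr_iff.mp h
  exact hij (hang_inr_inj he).1

theorem goodPair_hang_root_inr (i : Fin n) (j : Fin n') (x : (f i).V) (y : (g j).V) :
    GoodPair (hang n f) (hang n' g) (Sum.inl (), Sum.inl ()) (Sum.inr ⟨i, x⟩, Sum.inr ⟨j, y⟩) :=
  ⟨iff_of_false (fun h => nomatch h) (fun h => nomatch h),
    iff_of_false (fun h => nomatch h) (fun h => nomatch h)⟩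

theorem goodPair_hang_inr_root {i : Fin n} {j : Fin n'} (hf : (f i).IsTree) (hg : (g j).IsTree)
    {x : (f i).V} {y : (g j).V} (h : GoodPair (f i) (g j) (x, y) ((f i).root, (g j).root)) :
    GoodPair (hang n f) (hang n' g) (Sum.inr ⟨i, x⟩, Sum.inr ⟨j, y⟩) (Sum.inl (), Sum.inl ()) :=
  ⟨hang_parent_inr_eq_inl_iff.trans <| (hf.1 x).trans <| h.2.trans <| (hg.1 y).symm.trans
      hang_parent_inr_eq_inl_iff.symm,
    iff_of_false (fun h => nomatch h) (fun h => nomatch h)⟩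

theorem goodPair_hang_inr_inr {i : Fin n} {j : Fin n'} {x x' : (f i).V} {y y' : (g j).V}
    (h : GoodPair (f i) (g j) (x, y) (x', y')) :
    GoodPair (hang n f) (hang n' g) (Sum.inr ⟨i, x⟩, Sum.inr ⟨j, y⟩)
      (Sum.inr ⟨i, x'⟩, Sum.inr ⟨j, y'⟩) :=
  ⟨hang_parent_inr_eq_inr_iff.trans <| h.1.trans hang_parent_inr_eq_inr_iff.symm,
    fun he => congrArg (fun v => (Sum.inr ⟨j, v⟩ : (hang n' g).V))
      (h.2.mp (eq_of_heq (hang_inr_inj he).2)),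
    fun he => congrArg (fun v => (Sum.inr ⟨i, v⟩ : (hang n f).V))
      (h.2.mpr (eq_of_heq (hang_inr_inj he).2))⟩

theorem goodPair_hang_inr_inr_of_ne {i i' : Fin n} {j j' : Fin n'} (hi : i ≠ i') (hj : j ≠ j')
    (x : (f i).V) (y : (g j).V) (x' : (f i').V) (y' : (g j').V) :
    GoodPair (hang n f) (hang n' g) (Sum.inr ⟨i, x⟩, Sum.inr ⟨j, y⟩)
      (Sum.inr ⟨i', x'⟩, Sum.inr ⟨j', y'⟩) :=
  ⟨iff_of_false (hang_parent_inr_ne_inr hi x x') (hang_parent_inr_ne_inr hj y y'),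
    iff_of_false (fun h => hi (hang_inr_inj h).1) (fun h => hj (hang_inr_inj h).1)⟩

variable (f g) in
/-- Duplicator's invariant on `hang n f` and `hang n' g`: `M` matches the components entered so
far, and every matched pair carries a subgame that Duplicator wins. -/
structure HangPos (r a b : ℕ) (M : List (Fin n × Fin n'))
    (ps : List ((hang n f).V × (hang n' g).V)) : Prop where
  nodup_fst : (M.map Prod.fst).Nodup
  nodup_snd : (M.map Prod.snd).Nodup
  mem : ∀ p ∈ ps, p = (Sum.inl (), Sum.inl ()) ∨
    ∃ q ∈ M, ∃ x y, p = (Sum.inr ⟨q.1, x⟩, Sum.inr ⟨q.2, y⟩)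
  win : ∀ q ∈ M, ∃ l : List ((f q.1).V × (g q.2).V), ((f q.1).root, (g q.2).root) ∈ l ∧
    DupWinsBlocks (f q.1) (g q.2) r a b l ∧
    ∀ x y, (Sum.inr ⟨q.1, x⟩, Sum.inr ⟨q.2, y⟩) ∈ ps → (x, y) ∈ l

namespace HangPos

variable {r a b : ℕ} {M : List (Fin n × Fin n')} {ps : List ((hang n f).V × (hang n' g).V)}

theorem goodPairs (hf : ∀ i, (f i).IsTree) (hg : ∀ j, (g j).IsTree)
    (h : HangPos f g r a b M ps) : GoodPairs (hang n f) (hang n' g) ps := by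
  intro p hp p' hp'
  rcases h.mem p hp with rfl | ⟨q, hq, x, y, rfl⟩ <;>
    rcases h.mem p' hp' with rfl | ⟨q', hq', x', y', rfl⟩
  · exact ⟨iff_of_false (fun h => nomatch h) (fun h => nomatch h), iff_of_true rfl rfl⟩
  · exact goodPair_hang_root_inr _ _ _ _
  · obtain ⟨l, hroot, hl, hps⟩ := h.win q hq
    exact goodPair_hang_inr_root (hf _) (hg _) (hl.goodPairs _ (hps x y hp) _ hroot)
  · by_cases hqq : q = q'
    · subst hqq
      obtain ⟨l, -, hl, hps⟩ := h.win q hq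
      exact goodPair_hang_inr_inr (hl.goodPairs _ (hps x y hp) _ (hps x' y' hp'))
    · exact goodPair_hang_inr_inr_of_ne
        (fun he => hqq (List.inj_on_of_nodup_map h.nodup_fst hq hq' he))
        (fun he => hqq (List.inj_on_of_nodup_map h.nodup_snd hq hq' he)) x y x' y'

theorem mono {r' a' b' : ℕ} (h : HangPos f g r a b M ps) (hr : r' ≤ r) (ha : a' ≤ a)
    (hb : b' ≤ b) : HangPos f g r' a' b' M ps :=
  ⟨h.nodup_fst, h.nodup_snd, h.mem, fun q hq => (h.win q hq).imp fun _ ⟨hroot, hl, hps⟩ =>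
    ⟨hroot, hl.mono hr ha hb, hps⟩⟩

theorem cons_root (h : HangPos f g r a b M ps) :
    HangPos f g r a b M ((Sum.inl (), Sum.inl ()) :: ps) := by
  refine ⟨h.nodup_fst, h.nodup_snd, fun p hp => ?_, fun q hq => ?_⟩
  · rcases List.mem_cons.mp hp with rfl | hp
    exacts [Or.inl rfl, h.mem p hp]
  · obtain ⟨l, hroot, hl, hps⟩ := h.win q hq
    refine ⟨l, hroot, hl, fun x y hxy => hps x y ?_⟩
    rcases List.mem_cons.mp hxy with he | hxy
    exacts [(nomatch congrArg Prod.fst he), hxy]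

theorem cons_fresh {i : Fin n} {j : Fin n'} (h : HangPos f g r a b M ps)
    (hi : i ∉ M.map Prod.fst) (hj : j ∉ M.map Prod.snd)
    (hD : DupWinsBlocks (f i) (g j) r a b [((f i).root, (g j).root)]) :
    HangPos f g r a b ((i, j) :: M) ps := by
  refine ⟨List.nodup_cons.mpr ⟨hi, h.nodup_fst⟩, List.nodup_cons.mpr ⟨hj, h.nodup_snd⟩,
    fun p hp => ?_, fun q hq => ?_⟩
  · rcases h.mem p hp with hp | ⟨q, hq, x, y, hp⟩
    exacts [Or.inl hp, Or.inr ⟨q, List.mem_cons_of_mem _ hq, x, y, hp⟩]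
  · rcases List.mem_cons.mp hq with rfl | hq
    · refine ⟨_, List.mem_singleton_self _, hD, fun x y hxy => absurd hxy fun hxy => hi ?_⟩
      rcases h.mem _ hxy with he | ⟨q, hq, _, _, he⟩
      · exact nomatch congrArg Prod.fst he
      · have hiq : i = q.1 := (hang_inr_inj (congrArg Prod.fst he)).1
        exact hiq ▸ List.mem_map_of_mem hq
    · exact h.win q hq

theorem move {i : Fin n} {j : Fin n'} (h : HangPos f g (r + 1) a b M ps) (ha : 1 ≤ a)
    (hab : a - 1 ≤ b) (hq : (i, j) ∈ M) (x : (f i).V) :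
    ∃ y, HangPos f g r a (a - 1) M ((Sum.inr ⟨i, x⟩, Sum.inr ⟨j, y⟩) :: ps) := by
  obtain ⟨l, hroot, hl, hps⟩ := h.win _ hq
  obtain ⟨y, hy⟩ := hl.2.1 ha x
  refine ⟨y, h.nodup_fst, h.nodup_snd, fun p hp => ?_, fun q' hq' => ?_⟩
  · rcases List.mem_cons.mp hp with rfl | hp
    exacts [Or.inr ⟨_, hq, x, y, rfl⟩, h.mem p hp]
  · by_cases hqq : q' = (i, j)
    · subst hqq
      refine ⟨_, List.mem_cons_of_mem _ hroot, hy, fun x' y' hxy => ?_⟩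
      rcases List.mem_cons.mp hxy with he | hxy
      · rw [eq_of_heq (hang_inr_inj (congrArg Prod.fst he)).2,
          eq_of_heq (hang_inr_inj (congrArg Prod.snd he)).2]
        exact List.mem_cons_self
      · exact List.mem_cons_of_mem _ (hps x' y' hxy)
    · obtain ⟨l', hroot', hl', hps'⟩ := h.win q' hq'
      refine ⟨l', hroot', hl'.mono (Nat.le_succ r) le_rfl hab, fun x' y' hxy => ?_⟩
      rcases List.mem_cons.mp hxy with he | hxy
      · exact absurd (Prod.ext (hang_inr_inj (congrArg Prod.fst he)).1
          (hang_inr_inj (congrArg Prod.snd he)).1) hqq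
      · exact hps' x' y' hxy

theorem respond (h : HangPos f g (r + 1) a b M ps) (ha : 1 ≤ a) (hab : a - 1 ≤ b)
    (hfresh : ∀ i ∉ M.map Prod.fst, ∃ j ∉ M.map Prod.snd,
      DupWinsBlocks (f i) (g j) (r + 1) a (a - 1) [((f i).root, (g j).root)])
    (x : (hang n f).V) :
    ∃ y M', M'.length ≤ M.length + 1 ∧ HangPos f g r a (a - 1) M' ((x, y) :: ps) := by
  rcases x with ⟨⟩ | ⟨i, x⟩
  · exact ⟨Sum.inl (), M, by omega, (h.mono (Nat.le_succ r) le_rfl hab).cons_root⟩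
  by_cases hi : i ∈ M.map Prod.fst
  · obtain ⟨⟨_, j⟩, hq, rfl⟩ := List.mem_map.mp hi
    obtain ⟨y, hy⟩ := h.move ha hab hq x
    exact ⟨_, M, by omega, hy⟩
  · obtain ⟨j, hj, hD⟩ := hfresh i hi
    obtain ⟨y, hy⟩ := ((h.mono le_rfl le_rfl hab).cons_fresh hi hj hD).move ha le_rfl
      List.mem_cons_self x
    exact ⟨_, _, le_rfl, hy⟩

theorem swap (h : HangPos f g r a b M ps) :
    HangPos g f r b a (M.map Prod.swap) (ps.map Prod.swap) := by
  refine ⟨by simpa [List.map_map, Function.comp_def] using h.nodup_snd,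
    by simpa [List.map_map, Function.comp_def] using h.nodup_fst, ?_, ?_⟩
  · simp only [List.mem_map]
    rintro _ ⟨p, hp, rfl⟩
    rcases h.mem p hp with rfl | ⟨q, hq, x, y, rfl⟩
    exacts [Or.inl rfl, Or.inr ⟨q.swap, ⟨q, hq, rfl⟩, y, x, rfl⟩]
  · simp only [List.mem_map]
    rintro _ ⟨q, hq, rfl⟩
    obtain ⟨l, hroot, hl, hps⟩ := h.win q hq
    refine ⟨l.map Prod.swap, List.mem_map_of_mem hroot, hl.swap, fun y x hyx => ?_⟩
    obtain ⟨p, hp, he⟩ := List.mem_map.mp hyx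
    rw [← Prod.swap_swap p, he] at hp
    exact List.mem_map_of_mem (f := Prod.swap) (hps x y hp)

end HangPos

theorem dupWinsBlocks_hang (hf : ∀ i, (f i).IsTree) (hg : ∀ j, (g j).IsTree) {k c : ℕ}
    (fresh₁ : ∀ M : List (Fin n × Fin n'), M.length < k → ∀ i ∉ M.map Prod.fst,
      ∃ j ∉ M.map Prod.snd, ∀ r ≤ k, ∀ a,
        DupWinsBlocks (f i) (g j) r a (a - 1) [((f i).root, (g j).root)])
    (fresh₂ : ∀ M : List (Fin n × Fin n'), M.length < k → ∀ j ∉ M.map Prod.snd,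
      ∃ i ∉ M.map Prod.fst, ∀ r ≤ k, ∀ b ≤ c,
        DupWinsBlocks (f i) (g j) r (b - 1) b [((f i).root, (g j).root)])
    {r a b : ℕ} {M : List (Fin n × Fin n')} {ps : List ((hang n f).V × (hang n' g).V)}
    (hk : M.length + r ≤ k) (hc : b ≤ c) (hab : a ≤ b + 1) (hba : b ≤ a + 1)
    (h : HangPos f g r a b M ps) : DupWinsBlocks (hang n f) (hang n' g) r a b ps := by
  induction r generalizing a b M ps with
  | zero => exact h.goodPairs hf hg
  | succ r ih =>
    refine ⟨h.goodPairs hf hg, fun ha x => ?_, fun hb y => ?_⟩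
    · obtain ⟨y, M', hM', hy⟩ := h.respond ha (by omega) (fun i hi =>
        (fresh₁ M (by omega) i hi).imp fun _ ⟨hj, hD⟩ => ⟨hj, hD _ (by omega) a⟩) x
      exact ⟨y, ih (by omega) (by omega) (by omega) (by omega) hy⟩
    · have hfresh : ∀ j ∉ (M.map Prod.swap).map Prod.fst, ∃ i ∉ (M.map Prod.swap).map Prod.snd,
          DupWinsBlocks (g j) (f i) (r + 1) b (b - 1) [((g j).root, (f i).root)] := by
        simp only [List.map_map, Function.comp_def, Prod.fst_swap, Prod.snd_swap]
        exact fun j hj => (fresh₂ M (by omega) j hj).imp fun _ ⟨hi, hD⟩ =>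
          ⟨hi, (hD _ (by omega) b hc).swap⟩
      obtain ⟨x, M', hM', hx⟩ := h.swap.respond hb (by omega) hfresh y
      rw [List.length_map] at hM'
      refine ⟨x, ih (M := M'.map Prod.swap) (by rw [List.length_map]; omega) (by omega)
        (by omega) (by omega) ?_⟩
      simpa [List.map_map, Function.comp_def] using hx.swap

end HangGame

theorem dupWinsBlocks_diag (T : RTree) {r a b : ℕ} {ps : List (T.V × T.V)}
    (hps : ∀ p ∈ ps, p.1 = p.2) : DupWinsBlocks T T r a b ps := by
  have good (ps : List (T.V × T.V)) (hps : ∀ p ∈ ps, p.1 = p.2) : GoodPairs T T ps :=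
    fun p hp q hq => by rw [hps p hp, hps q hq]; exact ⟨Iff.rfl, Iff.rfl⟩
  induction r generalizing a b ps with
  | zero => exact good ps hps
  | succ r ih =>
    have hcons (v : T.V) : ∀ p ∈ (v, v) :: ps, p.1 = p.2 := fun p hp =>
      (List.mem_cons.mp hp).elim (fun h => h ▸ rfl) (hps p)
    exact ⟨good ps hps, fun _ x => ⟨x, ih (hcons x)⟩, fun _ y => ⟨y, ih (hcons y)⟩⟩

theorem dupWinsBlocks_of_eq {S T : RTree} (h : S = T) (r a b : ℕ) :
    DupWinsBlocks S T r a b [(S.root, T.root)] := by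
  subst h
  exact dupWinsBlocks_diag S fun p hp => by rw [List.mem_singleton.mp hp]

theorem dupWinsBlocks_single {T : RTree} (hT : T.parent T.root = none) {r a : ℕ} (ha : a ≤ 1)
    {ps : List (single.V × T.V)} (hps : ∀ p ∈ ps, p = (single.root, T.root)) :
    DupWinsBlocks single T r a 0 ps := by
  have good (ps : List (single.V × T.V)) (hps : ∀ p ∈ ps, p = (single.root, T.root)) :
      GoodPairs single T ps := fun p hp q hq => by
    rw [hps p hp, hps q hq]
    exact ⟨iff_of_false (fun h => nomatch h) (by simp [hT]), iff_of_true rfl rfl⟩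
  induction r generalizing ps with
  | zero => exact good ps hps
  | succ r ih =>
    refine ⟨good ps hps, fun _ x => ⟨T.root, ?_⟩, fun h => absurd h (by omega)⟩
    rw [show a - 1 = 0 by omega]
    exact ih fun p hp => (List.mem_cons.mp hp).elim (fun h => h ▸ rfl) (hps p)

theorem dupWinsBlocks_treePair (m : ℕ) :
    ∀ s r a b, r ≤ m → b ≤ s → a ≤ b + 1 → b ≤ a + 1 →
      DupWinsBlocks (TreePair m s).1 (TreePair m s).2 r a b
        [((TreePair m s).1.root, (TreePair m s).2.root)]
  | 0, r, a, b, _, hb, hab, _ => by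
    obtain rfl : b = 0 := by omega
    exact dupWinsBlocks_single rfl (by omega) fun p hp => List.mem_singleton.mp hp
  | s + 1, r, a, b, hr, hb, hab, hba => by
    obtain ⟨hW, hU⟩ := isTree_treePair m s
    have hg : ∀ j : Fin (m + 1),
        (if j.1 = m then (TreePair m s).1 else (TreePair m s).2).IsTree := fun j => by
      split_ifs
      exacts [hW, hU]
    show DupWinsBlocks (hang (m + 1) fun _ => (TreePair m s).2)
      (hang (m + 1) fun j => if j.1 = m then (TreePair m s).1 else (TreePair m s).2) r a b
      [(Sum.inl (), Sum.inl ())]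
    refine dupWinsBlocks_hang (k := m) (c := s + 1) (M := []) (fun _ => hU) hg ?_ ?_
      (by simpa using hr) hb hab hba ⟨List.nodup_nil, List.nodup_nil,
        fun p hp => Or.inl (List.mem_singleton.mp hp), fun q hq => nomatch hq⟩
    · intro M hM _ _
      obtain ⟨j, hj⟩ := Cardinal.exists_notMem_of_length_lt (⟨m, m.lt_succ_self⟩ :: M.map Prod.snd)
        (by simpa using hM)
      have hjm : j.1 ≠ m := fun h => hj (List.mem_cons.mpr (Or.inl (Fin.ext h)))
      exact ⟨j, fun h => hj (List.mem_cons_of_mem _ h), fun r _ a =>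
        dupWinsBlocks_of_eq (if_neg hjm).symm r a (a - 1)⟩
    · intro M hM j _
      obtain ⟨i, hi⟩ := Cardinal.exists_notMem_of_length_lt (M.map Prod.fst)
        (by simpa using hM.trans m.lt_succ_self)
      refine ⟨i, hi, fun r hr b hb => ?_⟩
      by_cases hjm : j.1 = m
      · rw [if_pos hjm]
        exact (dupWinsBlocks_treePair m s r b (b - 1) hr (by omega) (by omega) (by omega)).swap
      · exact dupWinsBlocks_of_eq (if_neg hjm).symm r (b - 1) b

/-- For every positive integer `s`, `KEIN_s` is not expressible by
any first-order sentence on rooted, locally finite trees of alternating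
quantifier depth at most `s - 1`. -/
theorem kein_not_expressible_low_aqd (s : ℕ) (hs : 0 < s) :
    ¬ ∃ B : FOFormula, B.IsSentence ∧ B.aqd ≤ s - 1 ∧
        ∀ T : RTree, T.IsTree → (Models T B ↔ Models T (KEIN s)) := by
  rintro ⟨B, -, haqd, hB⟩
  set m := max B.qd 1
  obtain ⟨hT₁, hT₂⟩ := isTree_treePair m s
  obtain ⟨hK₁, hK₂⟩ := P_treePair (le_max_right B.qd 1) s
  have hwin := dupWinsBlocks_treePair m s B.qd s s (le_max_left _ _) le_rfl (by omega) (by omega)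
  have htransfer := models_of_dupWinsBlocks le_rfl (by omega) hwin
  rw [hB _ hT₁, hB _ hT₂, models_KEIN, models_KEIN] at htransfer
  exact hK₂ (htransfer hK₁)
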